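/- arXiv:2504.21792 — 4 statements merged into one kernel-verified Lean document; each statement's English description precedes it below -/
import Mathlib

section
/- For every integer n ≥ 2 and every real A > 0 there exists a constant C > 0 such that for all real B ≥ 3, the number of n-tuples (t₁,…,tₙ) of integers with 1 ≤ |t_i| ≤ B for all i, for which there exist indices i ≠ j with gcd(t_i, t_j) > (log B)^A, is at most C · Bⁿ / (log B)^A. -/
/-!
A tuple with `gcd(t_i, t_j) > L` for some `i ≠ j` has `d ∣ t_i` and `d ∣ t_j` for some integer
`L < d ≤ B`. For a fixed ordered pair `(i, j)` and a fixed `d`, at most `(2B/d)² (2B)^(n-2)`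
tuples in the box have this property, so the count is at most `n² (2B)ⁿ ∑_{d > L} d⁻²`,
and the tail `∑_{d > L} d⁻²` is at most `2/L`.
-/

open Finset

lemma card_filter_dvd_Icc_erase_zero_le (M d : ℕ) :
    #{x ∈ (Icc (-(M : ℤ)) M).erase 0 | (d : ℤ) ∣ x} ≤ 2 * (M / d) := by
  set S := {m ∈ Ioc 0 M | d ∣ m}
  have hsub : {x ∈ (Icc (-(M : ℤ)) M).erase 0 | (d : ℤ) ∣ x} ⊆
      S.image (fun m : ℕ => (m : ℤ)) ∪ S.image (fun m : ℕ => -(m : ℤ)) := by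
    intro x hx
    simp only [mem_filter, mem_erase, mem_Icc, Int.natCast_dvd] at hx
    obtain ⟨⟨hx0, hxM⟩, hdx⟩ := hx
    have hS : x.natAbs ∈ S := by
      simp only [S, mem_filter, mem_Ioc]
      exact ⟨⟨Int.natAbs_pos.mpr hx0, by omega⟩, hdx⟩
    rcases Int.natAbs_eq x with h | h
    · exact mem_union_left _ (mem_image.mpr ⟨_, hS, h.symm⟩)
    · exact mem_union_right _ (mem_image.mpr ⟨_, hS, h.symm⟩)
  calc #{x ∈ (Icc (-(M : ℤ)) M).erase 0 | (d : ℤ) ∣ x}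
      ≤ #S + #S := (card_le_card hsub).trans
        ((card_union_le _ _).trans (add_le_add card_image_le card_image_le))
    _ = 2 * (M / d) := by rw [Nat.Ioc_filter_dvd_card_eq_div]; ring

lemma card_filter_piFinset_pair {ι α : Type*} [Fintype ι] [DecidableEq ι]
    (s : Finset α) (p : α → Prop) [DecidablePred p] {i j : ι} (hij : i ≠ j) :
    #{t ∈ Fintype.piFinset fun _ : ι => s | p (t i) ∧ p (t j)}
      = #{x ∈ s | p x} ^ 2 * #s ^ (Fintype.card ι - 2) := by
  have hpi : {t ∈ Fintype.piFinset fun _ : ι => s | p (t i) ∧ p (t j)}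
      = Fintype.piFinset fun k => if k ∈ ({i, j} : Finset ι) then {x ∈ s | p x} else s := by
    ext t
    simp only [mem_filter, Fintype.mem_piFinset, mem_insert, mem_singleton]
    constructor
    · rintro ⟨hs, hi, hj⟩ k
      split_ifs with hk
      · rcases hk with rfl | rfl <;> simp [*]
      · exact hs k
    · intro h
      refine ⟨fun k => ?_, ?_, ?_⟩
      · have := h k
        split_ifs at this <;> simp_all
      · have := h i
        simp_all
      · have := h j
        simp_all
  rw [hpi, Fintype.card_piFinset]
  simp only [apply_ite card]
  rw [prod_ite, prod_const, prod_const, filter_mem_eq_inter, univ_inter, card_pair hij, filter_not,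
    filter_mem_eq_inter, univ_inter, card_sdiff_of_subset (subset_univ _), card_pair hij, card_univ]

lemma card_filter_dvd_pair_piFinset_le {n : ℕ} {i j : Fin n} (hij : i ≠ j) (M : ℕ) {d : ℕ} (hd : 0 < d) :
    (#{t ∈ Fintype.piFinset fun _ : Fin n => (Icc (-(M : ℤ)) M).erase 0 |
        (d : ℤ) ∣ t i ∧ (d : ℤ) ∣ t j} : ℝ) ≤ (2 * M) ^ n / d ^ 2 := by
  have hn : 2 + (n - 2) = n := by
    have := Fintype.one_lt_card_iff.mpr ⟨i, j, hij⟩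
    rw [Fintype.card_fin] at this
    omega
  have hmult (e : ℕ) : (#{x ∈ (Icc (-(M : ℤ)) M).erase 0 | (e : ℤ) ∣ x} : ℝ) ≤ 2 * M / e := by
    calc (#{x ∈ (Icc (-(M : ℤ)) M).erase 0 | (e : ℤ) ∣ x} : ℝ) ≤ ((2 * (M / e) : ℕ) : ℝ) := by
          exact_mod_cast card_filter_dvd_Icc_erase_zero_le M e
      _ ≤ 2 * M / e := by
          rw [Nat.cast_mul, mul_div_assoc]
          exact mul_le_mul_of_nonneg_left Nat.cast_div_le zero_le_two
  have hbox : (#((Icc (-(M : ℤ)) M).erase 0) : ℝ) ≤ 2 * M := by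
    simpa using hmult 1
  rw [card_filter_piFinset_pair _ _ hij, Fintype.card_fin]
  push_cast
  calc _ ≤ (2 * M / d : ℝ) ^ 2 * (2 * M) ^ (n - 2) := by gcongr; exact hmult d
    _ = (2 * M) ^ (2 + (n - 2)) / d ^ 2 := by rw [pow_add]; field_simp
    _ = (2 * M) ^ n / d ^ 2 := by rw [hn]

lemma sum_Ioo_floor_inv_sq_le {L : ℝ} (hL : 0 < L) (N : ℕ) :
    ∑ d ∈ Ioo ⌊L⌋₊ N, ((d : ℝ) ^ 2)⁻¹ ≤ 2 / L :=
  (sum_Ioo_inv_sq_le _ _).trans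
    (div_le_div_of_nonneg_left zero_le_two hL (Nat.lt_floor_add_one L).le)

lemma ncard_tuples_large_gcd_le (n : ℕ) {B L : ℝ} (hB : 0 ≤ B) (hL : 0 < L) :
    (Set.ncard {t : Fin n → ℤ | (∀ i, 1 ≤ |t i| ∧ (|t i| : ℝ) ≤ B) ∧
        ∃ i j : Fin n, i ≠ j ∧ L < (Int.gcd (t i) (t j) : ℝ)} : ℝ)
      ≤ 2 * n ^ 2 * (2 * B) ^ n / L := by
  set M := ⌊B⌋₊
  set D := Ioo ⌊L⌋₊ (M + 1)
  set T : Fin n × Fin n → ℕ → Finset (Fin n → ℤ) := fun p d =>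
    {t ∈ Fintype.piFinset fun _ => (Icc (-(M : ℤ)) M).erase 0 | (d : ℤ) ∣ t p.1 ∧ (d : ℤ) ∣ t p.2}
  have hcover : {t : Fin n → ℤ | (∀ i, 1 ≤ |t i| ∧ (|t i| : ℝ) ≤ B) ∧
      ∃ i j : Fin n, i ≠ j ∧ L < (Int.gcd (t i) (t j) : ℝ)} ⊆
      ↑((univ.offDiag).biUnion fun p => D.biUnion (T p)) := by
    rintro t ⟨hbox, i, j, hij, hgcd⟩
    have hM (k : Fin n) : (t k).natAbs ≤ M :=
      Nat.le_floor (by rw [Nat.cast_natAbs, Int.cast_abs]; exact (hbox k).2)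
    have ht0 (k : Fin n) : t k ≠ 0 := abs_pos.mp (hbox k).1
    simp only [coe_biUnion, Set.mem_iUnion, mem_coe, mem_offDiag, mem_univ, true_and]
    refine ⟨(i, j), hij, Int.gcd (t i) (t j), ?_, ?_⟩
    · rw [mem_Ioo, Nat.floor_lt hL.le, Nat.lt_succ_iff]
      exact ⟨hgcd, (Nat.gcd_le_left _ (Int.natAbs_pos.mpr (ht0 i))).trans (hM i)⟩
    · simp only [T, mem_filter, Fintype.mem_piFinset, mem_erase, mem_Icc]
      refine ⟨fun k => ⟨ht0 k, ?_⟩, Int.gcd_dvd_left _ _, Int.gcd_dvd_right _ _⟩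
      have := hM k
      omega
  have hT : ∀ p ∈ univ.offDiag, ∀ d ∈ D, (#(T p d) : ℝ) ≤ (2 * B) ^ n * ((d : ℝ) ^ 2)⁻¹ := by
    intro p hp d hd
    calc (#(T p d) : ℝ) ≤ (2 * M) ^ n / d ^ 2 :=
          card_filter_dvd_pair_piFinset_le (mem_offDiag.mp hp).2.2 M (Nat.zero_lt_of_lt (mem_Ioo.mp hd).1)
      _ ≤ (2 * B) ^ n / d ^ 2 := by gcongr; exact Nat.floor_le hB
      _ = (2 * B) ^ n * ((d : ℝ) ^ 2)⁻¹ := div_eq_mul_inv _ _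
  have hpairs : (#(univ : Finset (Fin n)).offDiag : ℝ) ≤ n ^ 2 := by
    rw [offDiag_card, card_univ, Fintype.card_fin, ← sq]
    exact_mod_cast Nat.sub_le _ _
  calc _ ≤ (#((univ.offDiag).biUnion fun p => D.biUnion (T p)) : ℝ) := by
        exact_mod_cast (Set.ncard_le_ncard hcover (finite_toSet _)).trans_eq (Set.ncard_coe_finset _)
    _ ≤ ∑ p ∈ univ.offDiag, ∑ d ∈ D, (#(T p d) : ℝ) := by
        exact_mod_cast card_biUnion_le.trans (sum_le_sum fun _ _ => card_biUnion_le)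
    _ ≤ ∑ p ∈ univ.offDiag, ∑ d ∈ D, (2 * B) ^ n * ((d : ℝ) ^ 2)⁻¹ :=
        sum_le_sum fun p hp => sum_le_sum (hT p hp)
    _ = #(univ : Finset (Fin n)).offDiag * ((2 * B) ^ n * ∑ d ∈ D, ((d : ℝ) ^ 2)⁻¹) := by
        rw [sum_const, nsmul_eq_mul, ← mul_sum]
    _ ≤ n ^ 2 * ((2 * B) ^ n * (2 / L)) := by
        gcongr
        exact sum_Ioo_floor_inv_sq_le hL _
    _ = 2 * n ^ 2 * (2 * B) ^ n / L := by ring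

theorem stmt_3_general (n : ℕ) (hn : 2 ≤ n) (A : ℝ) :
    ∃ C : ℝ, 0 < C ∧ ∀ B : ℝ, 3 ≤ B →
      (Set.ncard {t : Fin n → ℤ |
          (∀ i, 1 ≤ |t i| ∧ (|t i| : ℝ) ≤ B) ∧
          ∃ i j : Fin n, i ≠ j ∧ (Real.log B) ^ A < (Int.gcd (t i) (t j) : ℝ)} : ℝ)
        ≤ C * B ^ n / (Real.log B) ^ A := by
  refine ⟨2 ^ (n + 1) * n ^ 2, by positivity, fun B hB => ?_⟩
  have hlog : 0 < Real.log B ^ A := Real.rpow_pos_of_pos (Real.log_pos (by linarith)) A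
  calc _ ≤ 2 * n ^ 2 * (2 * B) ^ n / Real.log B ^ A :=
        ncard_tuples_large_gcd_le n (by linarith) hlog
    _ = 2 ^ (n + 1) * n ^ 2 * B ^ n / Real.log B ^ A := by ring

/-- For every integer `n ≥ 2` and every real `A > 0` there exists a constant
`C > 0` such that for all real `B ≥ 3`, the number of `n`-tuples `(t₁,…,tₙ)` of integers with
`1 ≤ |t_i| ≤ B` for all `i`, for which there exist indices `i ≠ j` with
`gcd(t_i, t_j) > (log B)^A`, is at most `C · Bⁿ / (log B)^A`. -/
theorem stmt_3 (n : ℕ) (hn : 2 ≤ n) (A : ℝ) (hA : 0 < A) :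
    ∃ C : ℝ, 0 < C ∧ ∀ B : ℝ, 3 ≤ B →
      (Set.ncard {t : Fin n → ℤ |
          (∀ i, 1 ≤ |t i| ∧ (|t i| : ℝ) ≤ B) ∧
          ∃ i j : Fin n, i ≠ j ∧ (Real.log B) ^ A < (Int.gcd (t i) (t j) : ℝ)} : ℝ)
        ≤ C * B ^ n / (Real.log B) ^ A :=
  stmt_3_general n hn A
end

section
/- For every real ε > 0 there exists a constant C > 0 such that for every integer k ≥ 1 one has Σ_{n ≥ 1, k² ∣ n, n ∣ k^∞} n^{−(1/2 + ε)} ≤ C · k^{−(1 + ε)}. -/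
/-!
Put `s = 1/2 + ε`. The `n` in the sum are exactly `k² m` with `m` running over the integers all of
whose prime factors divide `k`, so by the Euler product the sum equals
`k^(-2s) ∏_{p ∣ k} (1 - p^(-s))⁻¹`. Every factor is at most `B = (1 - 2^(-s))⁻¹`, and at most `p^ε`
once `p ≥ Q` with `Q^ε ≥ B`; the product is therefore at most `B^Q k^ε`, and
`k^(-2s) k^ε = k^(-(1+ε))`.
-/

open Finset Filter

noncomputable def natCastRpowHom (s : ℝ) : ℕ →* ℝ where
  toFun n := (n : ℝ) ^ s
  map_one' := by simp
  map_mul' m n := by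
    push_cast
    exact Real.mul_rpow (Nat.cast_nonneg m) (Nat.cast_nonneg n)

@[simp]
lemma natCastRpowHom_apply (s : ℝ) (n : ℕ) : natCastRpowHom s n = (n : ℝ) ^ s := rfl

lemma one_sub_rpow_neg_pos {x s : ℝ} (hx : 1 < x) (hs : 0 < s) : 0 < 1 - x ^ (-s) := by
  linarith [Real.rpow_lt_one_of_one_lt_of_neg hx (neg_neg_of_pos hs)]

lemma inv_one_sub_rpow_neg_le {x s : ℝ} (hx : 2 ≤ x) (hs : 0 < s) :
    (1 - x ^ (-s))⁻¹ ≤ (1 - (2 : ℝ) ^ (-s))⁻¹ := by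
  refine inv_anti₀ (one_sub_rpow_neg_pos one_lt_two hs) ?_
  linarith [Real.rpow_le_rpow_of_nonpos two_pos hx (neg_nonpos.mpr hs.le)]

lemma hasSum_rpow_neg_factoredNumbers {s : ℝ} (hs : 0 < s) (S : Finset ℕ) :
    HasSum (fun m : Nat.factoredNumbers S ↦ (m : ℝ) ^ (-s))
      (∏ p ∈ S with p.Prime, (1 - (p : ℝ) ^ (-s))⁻¹) := by
  refine (EulerProduct.summable_and_hasSum_factoredNumbers_prod_filter_prime_geometric
    (f := natCastRpowHom (-s)) (fun {p} hp ↦ ?_) S).2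
  rw [natCastRpowHom_apply, Real.norm_of_nonneg (Real.rpow_nonneg (Nat.cast_nonneg p) _)]
  exact Real.rpow_lt_one_of_one_lt_of_neg (by exact_mod_cast hp.one_lt) (neg_neg_of_pos hs)

lemma Nat.mem_factoredNumbers_primeFactors_iff {k n : ℕ} (hk : k ≠ 0) :
    n ∈ Nat.factoredNumbers k.primeFactors ↔ ∀ p : ℕ, p.Prime → p ∣ n → p ∣ k := by
  simp only [Nat.mem_factoredNumbers', Nat.mem_primeFactors, hk, ne_eq, not_false_eq_true,
    and_true]
  exact forall₂_congr fun p hp ↦ by simp [hp]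

open Classical in
lemma hasSum_rpow_neg_factoredNumbers_dvd {s : ℝ} (hs : 0 < s) {S : Finset ℕ} {d : ℕ}
    (hd : d ∈ Nat.factoredNumbers S) :
    HasSum (fun n : ℕ ↦ if n ∈ Nat.factoredNumbers S ∧ d ∣ n then (n : ℝ) ^ (-s) else 0)
      ((d : ℝ) ^ (-s) * ∏ p ∈ S with p.Prime, (1 - (p : ℝ) ^ (-s))⁻¹) := by
  have hd0 : 0 < d := Nat.pos_of_ne_zero (Nat.ne_zero_of_mem_factoredNumbers hd)
  let mulLeft : Nat.factoredNumbers S → ℕ := fun m ↦ d * m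
  have hinj : Function.Injective mulLeft := fun a b hab ↦
    Subtype.ext (Nat.eq_of_mul_eq_mul_left hd0 hab)
  have hsupport : ∀ n ∉ Set.range mulLeft,
      (if n ∈ Nat.factoredNumbers S ∧ d ∣ n then (n : ℝ) ^ (-s) else 0) = 0 := by
    rintro n hn
    refine if_neg ?_
    rintro ⟨hnS, m, rfl⟩
    exact hn ⟨⟨m, Nat.mem_factoredNumbers_of_dvd hnS (dvd_mul_left m d)⟩, rfl⟩
  rw [← hinj.hasSum_iff hsupport]
  refine ((hasSum_rpow_neg_factoredNumbers hs S).mul_left ((d : ℝ) ^ (-s))).congr_fun fun m ↦ ?_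
  simp only [Function.comp_apply, mulLeft, Nat.mul_mem_factoredNumbers hd m.2,
    dvd_mul_right, and_self, if_true, Nat.cast_mul]
  exact Real.mul_rpow (Nat.cast_nonneg d) (Nat.cast_nonneg m)

open Classical in
lemma hasSum_rpow_neg_dvd_of_primeFactors_dvd {s : ℝ} (hs : 0 < s) {d k : ℕ} (hk : k ≠ 0)
    (hd : ∀ p : ℕ, p.Prime → p ∣ d → p ∣ k) :
    HasSum (fun n : ℕ ↦ if 0 < n ∧ d ∣ n ∧ (∀ p : ℕ, p.Prime → p ∣ n → p ∣ k)
        then (n : ℝ) ^ (-s) else 0)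
      ((d : ℝ) ^ (-s) * ∏ p ∈ k.primeFactors, (1 - (p : ℝ) ^ (-s))⁻¹) := by
  have hcond : ∀ n, (0 < n ∧ d ∣ n ∧ ∀ p : ℕ, p.Prime → p ∣ n → p ∣ k) ↔
      (n ∈ Nat.factoredNumbers k.primeFactors ∧ d ∣ n) := fun n ↦ by
    rw [Nat.mem_factoredNumbers_primeFactors_iff hk]
    refine ⟨fun ⟨_, hdn, hn⟩ ↦ ⟨hn, hdn⟩, fun ⟨hn, hdn⟩ ↦ ⟨Nat.pos_of_ne_zero ?_, hdn, hn⟩⟩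
    exact Nat.ne_zero_of_mem_factoredNumbers ((Nat.mem_factoredNumbers_primeFactors_iff hk).mpr hn)
  have hprimes : {p ∈ k.primeFactors | p.Prime} = k.primeFactors :=
    filter_true_of_mem fun p hp ↦ Nat.prime_of_mem_primeFactors hp
  simpa only [hcond, hprimes] using
    hasSum_rpow_neg_factoredNumbers_dvd hs ((Nat.mem_factoredNumbers_primeFactors_iff hk).mpr hd)

lemma prod_primeFactors_le_pow_mul_rpow {g : ℕ → ℝ} {B ε : ℝ} {Q k : ℕ} (hk : k ≠ 0)
    (hε : 0 ≤ ε) (hB : 1 ≤ B) (hBQ : B ≤ (Q : ℝ) ^ ε) (hg0 : ∀ p, p.Prime → 0 ≤ g p)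
    (hgB : ∀ p, p.Prime → g p ≤ B) :
    ∏ p ∈ k.primeFactors, g p ≤ B ^ Q * (k : ℝ) ^ ε := by
  have hg0' : ∀ p ∈ k.primeFactors, 0 ≤ g p := fun p hp ↦ hg0 p (Nat.prime_of_mem_primeFactors hp)
  have hsmall : ∏ p ∈ k.primeFactors with p < Q, g p ≤ B ^ Q := by
    calc ∏ p ∈ k.primeFactors with p < Q, g p
        ≤ ∏ _p ∈ k.primeFactors.filter (· < Q), B :=
          prod_le_prod (fun p hp ↦ hg0' p (mem_filter.mp hp).1)
            fun p hp ↦ hgB p (Nat.prime_of_mem_primeFactors (mem_filter.mp hp).1)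
      _ = B ^ #{p ∈ k.primeFactors | p < Q} := prod_const B
      _ ≤ B ^ Q := by
          refine pow_le_pow_right₀ hB ((card_le_card fun p hp ↦ ?_).trans (card_range Q).le)
          exact mem_range.mpr (mem_filter.mp hp).2
  have hlarge : ∏ p ∈ k.primeFactors with ¬p < Q, g p ≤ (k : ℝ) ^ ε := by
    calc ∏ p ∈ k.primeFactors with ¬p < Q, g p
        ≤ ∏ p ∈ k.primeFactors with ¬p < Q, (p : ℝ) ^ ε := by
          refine prod_le_prod (fun p hp ↦ hg0' p (mem_filter.mp hp).1) fun p hp ↦ ?_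
          obtain ⟨hpk, hpQ⟩ := mem_filter.mp hp
          calc g p ≤ B := hgB p (Nat.prime_of_mem_primeFactors hpk)
            _ ≤ (Q : ℝ) ^ ε := hBQ
            _ ≤ (p : ℝ) ^ ε := by gcongr; exact_mod_cast not_lt.mp hpQ
      _ = (∏ p ∈ k.primeFactors with ¬p < Q, p : ℕ) ^ ε := by
          rw [Nat.cast_prod, Real.finsetProd_rpow _ _ fun p _ ↦ Nat.cast_nonneg p]
      _ ≤ (k : ℝ) ^ ε := by
          gcongr
          exact Nat.le_of_dvd (Nat.pos_of_ne_zero hk)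
            ((prod_dvd_prod_of_subset _ _ _ (filter_subset _ _)).trans
              (Nat.prod_primeFactors_dvd k))
  rw [← prod_filter_mul_prod_filter_not k.primeFactors (· < Q)]
  exact mul_le_mul hsmall hlarge (prod_nonneg fun p hp ↦ hg0' p (mem_filter.mp hp).1)
    (by positivity)

open Classical in
/-- For every real `ε > 0` there exists a constant `C > 0` such that for every
integer `k ≥ 1` one has `Σ_{n ≥ 1, k² ∣ n, n ∣ k^∞} n^{−(1/2 + ε)} ≤ C · k^{−(1 + ε)}`,
where `n ∣ k^∞` means every prime dividing `n` also divides `k`. -/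
theorem stmt_8 (ε : ℝ) (hε : 0 < ε) :
    ∃ C : ℝ, 0 < C ∧ ∀ k : ℕ, 1 ≤ k →
      (∑' n : ℕ, if 0 < n ∧ k ^ 2 ∣ n ∧ (∀ p : ℕ, p.Prime → p ∣ n → p ∣ k)
          then (n : ℝ) ^ (-(1 / 2 + ε)) else 0)
        ≤ C * (k : ℝ) ^ (-(1 + ε)) := by
  have hs : 0 < 1 / 2 + ε := by positivity
  set B : ℝ := (1 - (2 : ℝ) ^ (-(1 / 2 + ε)))⁻¹
  have hB : 1 ≤ B := (one_le_inv₀ (one_sub_rpow_neg_pos one_lt_two hs)).mpr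
    (sub_le_self _ (Real.rpow_nonneg zero_le_two _))
  obtain ⟨Q, hQ⟩ : ∃ Q : ℕ, B ≤ (Q : ℝ) ^ ε :=
    (((tendsto_rpow_atTop hε).comp tendsto_natCast_atTop_atTop).eventually_ge_atTop B).exists
  refine ⟨B ^ Q, by positivity, fun k hk ↦ ?_⟩
  have hk0 : k ≠ 0 := Nat.one_le_iff_ne_zero.mp hk
  have hk' : (0 : ℝ) < k := by exact_mod_cast hk
  rw [(hasSum_rpow_neg_dvd_of_primeFactors_dvd hs hk0 fun p hp ↦ hp.dvd_of_dvd_pow).tsum_eq]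
  calc ((k ^ 2 : ℕ) : ℝ) ^ (-(1 / 2 + ε)) *
        ∏ p ∈ k.primeFactors, (1 - (p : ℝ) ^ (-(1 / 2 + ε)))⁻¹
      ≤ ((k ^ 2 : ℕ) : ℝ) ^ (-(1 / 2 + ε)) * (B ^ Q * (k : ℝ) ^ ε) := by
        gcongr
        refine prod_primeFactors_le_pow_mul_rpow hk0 hε.le hB hQ (fun p hp ↦ ?_) fun p hp ↦ ?_
        · exact (inv_pos.mpr (one_sub_rpow_neg_pos (by exact_mod_cast hp.one_lt) hs)).le
        · exact inv_one_sub_rpow_neg_le (by exact_mod_cast hp.two_le) hs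
    _ = B ^ Q * (k : ℝ) ^ (-(1 + ε)) := by
        rw [Nat.cast_pow, ← Real.rpow_natCast, ← Real.rpow_mul hk'.le, mul_left_comm,
          ← Real.rpow_add hk']
        congr 2
        push_cast
        ring
end

section
/- Let w and b₁,…,bₙ be positive integers with gcd(b₁,…,bₙ) = 1. Then g(w,(bᵢ)ᵢ) = μ²(2w) · ∏_{p ∣ w} Σ(p) · ∏_{m=1}^n ∏_{p > 2, p ∣ bᵢ for all i ≠ m, p ∤ b_m w} Σ_m(p). In particular, if also w', b'₁,…,b'ₙ are positive integers with gcd(b'₁,…,b'ₙ) = 1 and gcd(w·∏ᵢ bᵢ, w'·∏ᵢ b'ᵢ) = 1, then g(ww', (bᵢ b'ᵢ)ᵢ) = g(w,(bᵢ)ᵢ) · g(w',(b'ᵢ)ᵢ). -/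
open ArithmeticFunction
open scoped ArithmeticFunction.Moebius

/-- `hⱼ(p)`: `1` if `p ≡ 1 (mod 4)`; for `p ≡ 3 (mod 4)` it is `0` if `j ∈ D` and `1`
otherwise. -/
noncomputable def hD {n : ℕ} (D : Finset (Fin n)) (j : Fin n) (p : ℕ) : ℝ :=
  if p % 4 = 1 then 1 else if j ∈ D then 0 else 1

/-- `Σ(p) = (1 + (1/p) Σⱼ hⱼ(p)/cⱼ)⁻¹`. -/
noncomputable def SigmaP {n : ℕ} (c : Fin n → ℝ) (D : Finset (Fin n)) (p : ℕ) : ℝ :=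
  (1 + (1 / (p : ℝ)) * ∑ j, hD D j p / c j)⁻¹

/-- `Σ_m(p) = Σ(p) · (1 + (1/p) Σ_{j ≠ m} hⱼ(p)/cⱼ)`. -/
noncomputable def SigmaM {n : ℕ} (c : Fin n → ℝ) (D : Finset (Fin n)) (m : Fin n)
    (p : ℕ) : ℝ :=
  SigmaP c D p * (1 + (1 / (p : ℝ)) * ∑ j ∈ Finset.univ.erase m, hD D j p / c j)

open Classical in
/-- `F(d₁,…,dₙ)`. -/
noncomputable def Ffun {n : ℕ} (c : Fin n → ℝ) (D : Finset (Fin n))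
    (d : Fin n → ℕ) : ℝ :=
  ∏ p ∈ (∏ j, d j).primeFactors.filter (fun p => 2 < p),
    ((1 + (1 / (p : ℝ)) * ∑ j, hD D j p / c j)⁻¹ *
      (1 + (1 / (p : ℝ)) *
        ∑ j ∈ Finset.univ.filter (fun j : Fin n => ¬ p ∣ d j), hD D j p / c j))

/-- `g(w,(bᵢ)ᵢ) = μ²(2w)·F(d₁,…,dₙ)` with `dⱼ = w · gcd{bᵢ : i ≠ j}`. -/
noncomputable def gFun {n : ℕ} (c : Fin n → ℝ) (D : Finset (Fin n))
    (w : ℕ) (b : Fin n → ℕ) : ℝ :=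
  (μ (2 * w) : ℝ) ^ 2 *
    Ffun c D (fun j => w * Finset.gcd (Finset.univ.erase j) b)

/-!
Write `Gⱼ = gcd {bᵢ : i ≠ j}`, so that `dⱼ = w Gⱼ`. As `gcd (b₁, …, bₙ) = 1`, a prime dividing
`G_m` divides neither `b_m` nor any other `Gⱼ`. Hence an odd prime `p ∣ ∏ dⱼ` either divides `w`,
and then every `dⱼ` (its Euler factor is `Σ(p)`), or divides exactly one `G_m` and not `w`, and then
`p ∤ dⱼ` exactly for `j ≠ m` (its Euler factor is `Σ_m(p)`).

Multiplicativity is proved directly from the definition: if `w ∏ bᵢ` and `w' ∏ b'ᵢ` are coprime then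
`Gⱼ(b b') = Gⱼ(b) Gⱼ(b')`, each Euler factor of `F` only sees one of the two coprime parts of the
`dⱼ`, and `μ²(2ww') = μ²(2w) μ²(2w')`.
-/

open Finset

namespace Finset

theorem gcd_mul_of_coprime {ι : Type*} {s : Finset ι} {f g : ι → ℕ}
    (h : ∀ i ∈ s, ∀ j ∈ s, Nat.Coprime (f i) (g j)) :
    s.gcd (fun i => f i * g i) = s.gcd f * s.gcd g := by
  rcases s.eq_empty_or_nonempty with rfl | hs
  · simp
  induction hs using Nonempty.cons_induction with
  | singleton a => simp
  | cons a s ha hs ih =>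
    have h' : ∀ i ∈ s, ∀ j ∈ s, Nat.Coprime (f i) (g j) :=
      fun i hi j hj => h i (mem_cons_of_mem hi) j (mem_cons_of_mem hj)
    obtain ⟨k, hk⟩ := hs
    have hfa : Nat.Coprime (s.gcd g) (f a) :=
      ((h a (mem_cons_self a s) k (mem_cons_of_mem hk)).coprime_dvd_right (gcd_dvd hk)).symm
    have hga : Nat.Coprime (s.gcd f) (g a) :=
      (h k (mem_cons_of_mem hk) a (mem_cons_self a s)).coprime_dvd_left (gcd_dvd hk)
    simp only [gcd_cons, ih h']
    change Nat.gcd _ _ = Nat.gcd _ _ * Nat.gcd _ _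
    rw [Nat.gcd_comm, (h a (mem_cons_self a s) a (mem_cons_self a s)).gcd_mul,
      hfa.gcd_mul_right_cancel, hga.gcd_mul_left_cancel, Nat.gcd_comm (s.gcd f),
      Nat.gcd_comm (s.gcd g)]

variable {ι : Type*} [Fintype ι] [DecidableEq ι] (b : ι → ℕ)

theorem gcd_erase_dvd_prod [Nontrivial ι] (m : ι) : (univ.erase m).gcd b ∣ ∏ i, b i := by
  obtain ⟨i, hi⟩ := exists_ne m
  exact (gcd_dvd (mem_erase.mpr ⟨hi, mem_univ i⟩)).trans (dvd_prod_of_mem b (mem_univ i))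

theorem gcd_erase_ne_zero [Nontrivial ι] (hb : ∀ i, 0 < b i) (m : ι) :
    (univ.erase m).gcd b ≠ 0 :=
  ne_zero_of_dvd_ne_zero (prod_ne_zero_iff.mpr fun i _ => (hb i).ne') (gcd_erase_dvd_prod b m)

variable {b}

theorem coprime_gcd_erase (hgcd : univ.gcd b = 1) (m : ι) :
    Nat.Coprime (b m) ((univ.erase m).gcd b) := by
  rwa [← insert_erase (mem_univ m), gcd_insert] at hgcd

theorem coprime_of_dvd_gcd_erase (hgcd : univ.gcd b = 1) {k : ℕ} {m : ι}
    (hk : k ∣ (univ.erase m).gcd b) : Nat.Coprime k (b m) :=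
  (coprime_gcd_erase hgcd m).symm.coprime_dvd_left hk

theorem eq_of_dvd_gcd_erase (hgcd : univ.gcd b = 1) {k : ℕ} (hk : k ≠ 1) {m m' : ι}
    (hm : k ∣ (univ.erase m).gcd b) (hm' : k ∣ (univ.erase m').gcd b) : m = m' := by
  by_contra hne
  exact hk (Nat.Coprime.eq_one_of_dvd (coprime_of_dvd_gcd_erase hgcd hm)
    (hm'.trans (gcd_dvd (mem_erase.mpr ⟨hne, mem_univ m⟩))))

end Finset

theorem Nat.squarefree_two_mul_mul_iff {a b : ℕ} (h : Nat.Coprime a b) :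
    Squarefree (2 * (a * b)) ↔ Squarefree (2 * a) ∧ Squarefree (2 * b) := by
  refine ⟨fun hab => ⟨hab.squarefree_of_dvd ⟨b, by ring⟩, hab.squarefree_of_dvd ⟨a, by ring⟩⟩,
    fun ⟨ha, hb⟩ => ?_⟩
  obtain ⟨h2b, -, hb⟩ := Nat.squarefree_mul_iff.mp hb
  rw [← mul_assoc, Nat.squarefree_mul_iff]
  exact ⟨Nat.coprime_mul_iff_left.mpr ⟨h2b, h⟩, ha, hb⟩

theorem ArithmeticFunction.moebius_two_mul_mul_sq {a b : ℕ} (h : Nat.Coprime a b) :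
    μ (2 * (a * b)) ^ 2 = μ (2 * a) ^ 2 * μ (2 * b) ^ 2 := by
  simp only [moebius_sq, Nat.squarefree_two_mul_mul_iff h]
  split_ifs <;> simp_all

section EulerFactor

variable {n : ℕ} (c : Fin n → ℝ) (D : Finset (Fin n))

/-- The factor of `F` at the prime `p`, where `S` is the set of `j` with `p ∤ dⱼ`. -/
noncomputable def eulerFactor (p : ℕ) (S : Finset (Fin n)) : ℝ :=
  (1 + (1 / (p : ℝ)) * ∑ j, hD D j p / c j)⁻¹ * (1 + (1 / (p : ℝ)) * ∑ j ∈ S, hD D j p / c j)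

theorem Ffun_eq_prod_eulerFactor (d : Fin n → ℕ) :
    Ffun c D d = ∏ p ∈ (∏ j, d j).primeFactors with 2 < p,
      eulerFactor c D p {j | ¬ p ∣ d j} :=
  rfl

theorem eulerFactor_empty (p : ℕ) : eulerFactor c D p ∅ = SigmaP c D p := by
  simp [eulerFactor, SigmaP]

theorem eulerFactor_univ_erase (p : ℕ) (m : Fin n) :
    eulerFactor c D p (univ.erase m) = SigmaM c D m p :=
  rfl

theorem Ffun_mul_of_coprime {d d' : Fin n → ℕ} (h : Nat.Coprime (∏ j, d j) (∏ j, d' j)) :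
    Ffun c D (fun j => d j * d' j) = Ffun c D d * Ffun c D d' := by
  have hS : ∀ {d d' : Fin n → ℕ}, Nat.Coprime (∏ j, d j) (∏ j, d' j) →
      ∀ p ∈ (∏ j, d j).primeFactors,
        univ.filter (fun j => ¬ p ∣ d j * d' j) = univ.filter (fun j => ¬ p ∣ d j) := by
    intro d d' h p hp
    have hpd' : Nat.Coprime p (∏ j, d' j) := h.coprime_dvd_left (Nat.dvd_of_mem_primeFactors hp)
    refine filter_congr fun j _ => ?_
    rw [(hpd'.coprime_dvd_right (dvd_prod_of_mem d' (mem_univ j))).dvd_mul_right]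
  rw [Ffun_eq_prod_eulerFactor, Ffun_eq_prod_eulerFactor, Ffun_eq_prod_eulerFactor,
    prod_mul_distrib, h.primeFactors_mul, filter_union,
    prod_union (disjoint_filter_filter h.disjoint_primeFactors)]
  congr 1
  · refine prod_congr rfl fun p hp => ?_
    rw [hS h p (mem_filter.mp hp).1]
  · refine prod_congr rfl fun p hp => ?_
    simp_rw [mul_comm (d _)]
    rw [hS h.symm p (mem_filter.mp hp).1]

end EulerFactor

theorem gFun_mul {n : ℕ} (hn : 2 ≤ n) (c : Fin n → ℝ) (D : Finset (Fin n)) {w w' : ℕ}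
    {b b' : Fin n → ℕ} (h : Nat.Coprime (w * ∏ i, b i) (w' * ∏ i, b' i)) :
    gFun c D (w * w') (fun i => b i * b' i) = gFun c D w b * gFun c D w' b' := by
  have : Nontrivial (Fin n) := Fin.nontrivial_iff_two_le.mpr hn
  have hww' : Nat.Coprime w w' :=
    (h.coprime_dvd_left (dvd_mul_right w _)).coprime_dvd_right (dvd_mul_right w' _)
  have hbb' : ∀ i j, Nat.Coprime (b i) (b' j) := fun i j =>
    (h.coprime_dvd_left ((dvd_prod_of_mem b (mem_univ i)).mul_left w)).coprime_dvd_right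
      ((dvd_prod_of_mem b' (mem_univ j)).mul_left w')
  have hd : ∀ j, w * w' * (univ.erase j).gcd (fun i => b i * b' i)
      = w * (univ.erase j).gcd b * (w' * (univ.erase j).gcd b') := fun j => by
    rw [gcd_mul_of_coprime fun i _ k _ => hbb' i k]
    ring
  have hdd' : Nat.Coprime (∏ j, w * (univ.erase j).gcd b) (∏ j, w' * (univ.erase j).gcd b') :=
    Nat.Coprime.prod_left fun j _ => Nat.Coprime.prod_right fun k _ =>
      (h.coprime_dvd_left (mul_dvd_mul_left w (gcd_erase_dvd_prod b j))).coprime_dvd_right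
        (mul_dvd_mul_left w' (gcd_erase_dvd_prod b' k))
  have hμ : ((μ (2 * (w * w')) : ℤ) : ℝ) ^ 2 = (μ (2 * w) : ℝ) ^ 2 * (μ (2 * w') : ℝ) ^ 2 := by
    exact_mod_cast moebius_two_mul_mul_sq hww'
  simp only [gFun, hd, Ffun_mul_of_coprime c D hdd', hμ]
  ring

section Primitive

variable {n : ℕ} {b : Fin n → ℕ} {w : ℕ}

theorem filter_primeFactors_prod_mul_gcd_erase (hn : 2 ≤ n) (hb : ∀ i, 0 < b i)
    (hgcd : univ.gcd b = 1) (hw : w ≠ 0) (h2w : Nat.Coprime 2 w) :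
    (∏ j, w * (univ.erase j).gcd b).primeFactors.filter (2 < ·) =
      w.primeFactors ∪ univ.biUnion fun m =>
        ((univ.erase m).gcd b).primeFactors.filter fun p => 2 < p ∧ ¬ p ∣ b m * w := by
  have : Nontrivial (Fin n) := Fin.nontrivial_iff_two_le.mpr hn
  have hprod : ∏ j, w * (univ.erase j).gcd b ≠ 0 :=
    prod_ne_zero_iff.mpr fun j _ => mul_ne_zero hw (gcd_erase_ne_zero b hb j)
  ext p
  simp only [mem_filter, mem_union, mem_biUnion, mem_univ, true_and, Nat.mem_primeFactors,
    and_iff_left hprod, and_iff_left hw, ne_eq, gcd_erase_ne_zero b hb, not_false_eq_true,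
    and_true]
  refine ⟨fun ⟨⟨hp, hpd⟩, h2p⟩ => ?_, ?_⟩
  · by_cases hpw : p ∣ w
    · exact Or.inl ⟨hp, hpw⟩
    obtain ⟨m, -, hpm⟩ := (hp.prime.dvd_finsetProd_iff _).mp hpd
    have hpG := (hp.dvd_mul.mp hpm).resolve_left hpw
    exact Or.inr ⟨m, ⟨hp, hpG⟩, h2p, by rwa [(coprime_of_dvd_gcd_erase hgcd hpG).dvd_mul_left]⟩
  · rintro (⟨hp, hpw⟩ | ⟨m, ⟨hp, hpG⟩, h2p, -⟩)
    · have hp2 : p ≠ 2 := by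
        rintro rfl
        exact absurd (h2w.eq_one_of_dvd hpw) (by norm_num)
      exact ⟨⟨hp, (hpw.mul_right _).trans (dvd_prod_of_mem _ (mem_univ ⟨0, by omega⟩))⟩,
        lt_of_le_of_ne hp.two_le hp2.symm⟩
    · exact ⟨⟨hp, (hpG.mul_left w).trans (dvd_prod_of_mem _ (mem_univ m))⟩, h2p⟩

theorem filter_not_dvd_mul_gcd_erase (hgcd : univ.gcd b = 1) {p : ℕ} (hp : p.Prime) {m : Fin n}
    (hpG : p ∣ (univ.erase m).gcd b) (hpw : ¬ p ∣ w) :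
    univ.filter (fun j => ¬ p ∣ w * (univ.erase j).gcd b) = univ.erase m := by
  ext j
  simp only [mem_filter, mem_univ, true_and, mem_erase, and_true, hp.dvd_mul, hpw, false_or]
  exact ⟨fun hj hjm => hj (hjm ▸ hpG),
    fun hjm hj => hjm (eq_of_dvd_gcd_erase hgcd hp.ne_one hj hpG)⟩

theorem gFun_eq_of_gcd_eq_one (hn : 2 ≤ n) (c : Fin n → ℝ) (D : Finset (Fin n))
    (hb : ∀ i, 0 < b i) (hgcd : univ.gcd b = 1) :
    gFun c D w b = (μ (2 * w) : ℝ) ^ 2 * (∏ p ∈ w.primeFactors, SigmaP c D p) *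
      ∏ m : Fin n, ∏ p ∈ ((univ.erase m).gcd b).primeFactors.filter
        (fun p => 2 < p ∧ ¬ p ∣ b m * w), SigmaM c D m p := by
  by_cases hsf : Squarefree (2 * w)
  swap
  · simp [gFun, moebius_eq_zero_of_not_squarefree hsf]
  obtain ⟨h2w, -, hsfw⟩ := Nat.squarefree_mul_iff.mp hsf
  have hndvd : ∀ m, ∀ p ∈ ((univ.erase m).gcd b).primeFactors.filter
      (fun p => 2 < p ∧ ¬ p ∣ b m * w), p.Prime ∧ p ∣ (univ.erase m).gcd b ∧ ¬ p ∣ w :=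
    fun m p hp => by
      simp only [mem_filter, Nat.mem_primeFactors] at hp
      exact ⟨hp.1.1, hp.1.2.1, fun hpw => hp.2.2 (hpw.mul_left _)⟩
  have hdisj : Disjoint w.primeFactors (univ.biUnion fun m =>
      ((univ.erase m).gcd b).primeFactors.filter fun p => 2 < p ∧ ¬ p ∣ b m * w) := by
    rw [disjoint_biUnion_right]
    exact fun m _ => disjoint_left.mpr fun p hpw hpm =>
      (hndvd m p hpm).2.2 (Nat.dvd_of_mem_primeFactors hpw)
  have hpair : ((univ : Finset (Fin n)) : Set (Fin n)).PairwiseDisjoint fun m =>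
      ((univ.erase m).gcd b).primeFactors.filter fun p => 2 < p ∧ ¬ p ∣ b m * w :=
    fun m _ m' _ hmm' => disjoint_left.mpr fun p hpm hpm' =>
      hmm' (eq_of_dvd_gcd_erase hgcd (hndvd m p hpm).1.ne_one (hndvd m p hpm).2.1
        (hndvd m' p hpm').2.1)
  rw [gFun, Ffun_eq_prod_eulerFactor,
    filter_primeFactors_prod_mul_gcd_erase hn hb hgcd hsfw.ne_zero h2w, prod_union hdisj,
    prod_biUnion hpair, mul_assoc]
  congr 2
  · refine prod_congr rfl fun p hp => ?_
    rw [filter_eq_empty_iff.mpr fun j _ hj => hj ((Nat.dvd_of_mem_primeFactors hp).mul_right _),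
      eulerFactor_empty]
  · refine prod_congr rfl fun m _ => prod_congr rfl fun p hp => ?_
    obtain ⟨hpp, hpG, hpw⟩ := hndvd m p hp
    rw [filter_not_dvd_mul_gcd_erase hgcd hpp hpG hpw, eulerFactor_univ_erase]

end Primitive

open Classical in
theorem stmt_11_general (n : ℕ) (hn : 2 ≤ n) (c : Fin n → ℝ)
    (D : Finset (Fin n)) (w : ℕ) (b : Fin n → ℕ) (hb : ∀ i, 0 < b i)
    (hgcd : Finset.gcd Finset.univ b = 1) :
    gFun c D w b
      = (μ (2 * w) : ℝ) ^ 2 * (∏ p ∈ w.primeFactors, SigmaP c D p) *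
        ∏ m : Fin n,
          ∏ p ∈ (Finset.gcd (Finset.univ.erase m) b).primeFactors.filter
              (fun p => 2 < p ∧ ¬ p ∣ b m * w), SigmaM c D m p
    ∧ ∀ w' : ℕ, 0 < w' → ∀ b' : Fin n → ℕ, (∀ i, 0 < b' i) →
        Finset.gcd Finset.univ b' = 1 →
        Nat.Coprime (w * ∏ i, b i) (w' * ∏ i, b' i) →
        gFun c D (w * w') (fun i => b i * b' i) = gFun c D w b * gFun c D w' b' :=
  ⟨gFun_eq_of_gcd_eq_one hn c D hb hgcd, fun _ _ _ _ _ h => gFun_mul hn c D h⟩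

open Classical in
/-- if `gcd(b₁,…,bₙ) = 1` then
`g(w,(bᵢ)) = μ²(2w) ∏_{p∣w} Σ(p) ∏_{m=1}^n ∏_{p>2, p∣bᵢ ∀i≠m, p∤b_m w} Σ_m(p)`;
in particular `g` is multiplicative in the stated sense. -/
theorem stmt_11 (n : ℕ) (hn : 2 ≤ n) (c : Fin n → ℝ) (hc : ∀ i, 1 ≤ c i)
    (D : Finset (Fin n)) (w : ℕ) (hw : 0 < w) (b : Fin n → ℕ) (hb : ∀ i, 0 < b i)
    (hgcd : Finset.gcd Finset.univ b = 1) :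
    gFun c D w b
      = (μ (2 * w) : ℝ) ^ 2 * (∏ p ∈ w.primeFactors, SigmaP c D p) *
        ∏ m : Fin n,
          ∏ p ∈ (Finset.gcd (Finset.univ.erase m) b).primeFactors.filter
              (fun p => 2 < p ∧ ¬ p ∣ b m * w), SigmaM c D m p
    ∧ ∀ w' : ℕ, 0 < w' → ∀ b' : Fin n → ℕ, (∀ i, 0 < b' i) →
        Finset.gcd Finset.univ b' = 1 →
        Nat.Coprime (w * ∏ i, b i) (w' * ∏ i, b' i) →
        gFun c D (w * w') (fun i => b i * b' i) = gFun c D w b * gFun c D w' b' :=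
  stmt_11_general n hn c D w b hb hgcd
end

section
/- For every blocking set 𝔅 there exists f ∈ OBM_Sub such that ({k}, f({k})) ∈ 𝔅 for every k ∈ {1,…,n}, and π(f(S)) = π(T) for every (S,T) ∈ 𝔅. -/
open Finset symmDiff

instance symmDiffComm' {γ : Type*} [DecidableEq γ] :
    Std.Commutative (fun a b : Finset γ => a ∆ b) := ⟨fun a b => symmDiff_comm a b⟩

instance symmDiffAssoc' {γ : Type*} [DecidableEq γ] :
    Std.Associative (fun a b : Finset γ => a ∆ b) := ⟨fun a b c => symmDiff_assoc a b c⟩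

/-- Projection from subsets of `{1,…,n} ∪ {−}` (the symbol `−` encoded as `none`) to
subsets of `{1,…,n}`, deleting `−`. -/
def proj {n : ℕ} (T : Finset (Option (Fin n))) : Finset (Fin n) :=
  Finset.univ.filter (fun j => some j ∈ T)

/-- The parity (in `𝔽₂ = ZMod 2`) of `|S ∩ A|` where `S ⊆ {1,…,n}` and
`A ⊆ {1,…,n} ∪ {−}`. -/
def par {n : ℕ} (S : Finset (Fin n)) (A : Finset (Option (Fin n))) : ZMod 2 :=
  ((S.filter (fun j => some j ∈ A)).card : ZMod 2)

/-- The set `g_{i,S}`: `∅` if the parities of `|S ∩ S_{i,1}|, |S ∩ S_{i,2}|, |S ∩ S_{i,3}|`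
all coincide; otherwise `{−} ∆ S_{i,k'} ∆ S_{i,k''}` where `k` is the odd one out and
`{k',k''}` are the other two indices. -/
def gIS {n : ℕ} (Sij : Fin 3 → Finset (Option (Fin n))) (S : Finset (Fin n)) :
    Finset (Option (Fin n)) :=
  if par S (Sij 0) = par S (Sij 1) ∧ par S (Sij 1) = par S (Sij 2) then ∅
  else if par S (Sij 1) = par S (Sij 2) then ({none} : Finset (Option (Fin n))) ∆ Sij 1 ∆ Sij 2
  else if par S (Sij 0) = par S (Sij 2) then ({none} : Finset (Option (Fin n))) ∆ Sij 0 ∆ Sij 2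
  else ({none} : Finset (Option (Fin n))) ∆ Sij 0 ∆ Sij 1

/-- `V_S`: the 𝔽₂-span (under symmetric difference) of the `g_{i,S}`, `1 ≤ i ≤ m`. -/
def VS {n m : ℕ} (Smat : Fin m → Fin 3 → Finset (Option (Fin n)))
    (S : Finset (Fin n)) : Finset (Finset (Option (Fin n))) :=
  (Finset.univ : Finset (Finset (Fin m))).image
    (fun s => s.fold (· ∆ ·) ∅ (fun i => gIS (Smat i) S))

/-- `W_S`: the elements of `V_S` avoiding `−` if `{−} ∈ V_S`, and `V_S` otherwise. -/
def WS {n m : ℕ} (Smat : Fin m → Fin 3 → Finset (Option (Fin n)))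
    (S : Finset (Fin n)) : Finset (Finset (Option (Fin n))) :=
  if ({(none : Option (Fin n))} : Finset (Option (Fin n))) ∈ VS Smat S then
    (VS Smat S).filter (fun T => none ∉ T)
  else VS Smat S

/-- The index set `ℐ = {(S,T) : ∅ ⊊ S ⊊ {1,…,n}, T ∈ W_S}`. -/
def idxSet {n m : ℕ} (Smat : Fin m → Fin 3 → Finset (Option (Fin n))) :
    Set (Finset (Fin n) × Finset (Option (Fin n))) :=
  {x | x.1.Nonempty ∧ x.1 ≠ Finset.univ ∧ x.2 ∈ WS Smat x.1}

/-- Two indices `(S₁,T₁)`, `(S₂,T₂)` are linked if `|S₂ ∩ T₁| + |S₁ ∩ T₂|` is odd and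
`|S₁| = 1` or `|S₂| = 1`. -/
def Linked {n : ℕ} (x y : Finset (Fin n) × Finset (Option (Fin n))) : Prop :=
  Odd ((y.1.filter (fun j => some j ∈ x.2)).card +
        (x.1.filter (fun j => some j ∈ y.2)).card) ∧
    (x.1.card = 1 ∨ y.1.card = 1)

/-- A blocking set: a subset `𝔅 ⊆ ℐ` such that every `k ∈ {1,…,n}` occurs as a singleton
first coordinate, and every singleton-indexed member of `𝔅` is unlinked with every
member of `𝔅`. -/
def IsBlocking {n m : ℕ} (Smat : Fin m → Fin 3 → Finset (Option (Fin n)))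
    (B : Set (Finset (Fin n) × Finset (Option (Fin n)))) : Prop :=
  B ⊆ idxSet Smat ∧
    (∀ k : Fin n, ∃ T ∈ WS Smat {k}, ({k}, T) ∈ B) ∧
    (∀ k : Fin n, ∀ T, ({k}, T) ∈ B → ∀ x ∈ B, ¬ Linked (({k} : Finset (Fin n)), T) x)

/- ######## auxiliary lemmas ######## -/

lemma mem_proj' {n : ℕ} (T : Finset (Option (Fin n))) (j : Fin n) :
    j ∈ proj T ↔ some j ∈ T := by simp [proj]

lemma mem_fold_symmDiff' {β γ : Type*} [DecidableEq β] [DecidableEq γ]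
    (g : γ → Finset β) (S : Finset γ) (x : β) :
    x ∈ S.fold (fun a b : Finset β => a ∆ b) ∅ g ↔ Odd ((S.filter fun i => x ∈ g i).card) := by
  induction S using Finset.induction_on with
  | empty => simp
  | @insert a s ha ih =>
    rw [Finset.fold_insert ha, Finset.mem_symmDiff, Finset.filter_insert]
    by_cases h : x ∈ g a
    · have hns : a ∉ s.filter fun i => x ∈ g i := fun hc => ha (Finset.mem_filter.mp hc).1
      rw [Nat.odd_iff] at ih
      simp [h, Finset.card_insert_of_notMem hns, ih, Nat.odd_iff]
      omega
    · simp [h, ih]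

lemma odd_card_symmDiff' {β : Type*} [DecidableEq β] (u v : Finset β) :
    Odd ((u ∆ v).card) ↔ Odd (u.card + v.card) := by
  have h1 : u ∆ v = (u ∪ v) \ (u ∩ v) := by
    ext x; simp [Finset.mem_symmDiff]; tauto
  have h2 := Finset.card_union_add_card_inter u v
  have h3 : ((u ∪ v) \ (u ∩ v)).card = (u ∪ v).card - (u ∩ v).card :=
    Finset.card_sdiff_of_subset Finset.inter_subset_union
  have h4 : (u ∩ v).card ≤ (u ∪ v).card := Finset.card_le_card Finset.inter_subset_union
  rw [h1, h3, Nat.odd_iff, Nat.odd_iff]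
  omega

lemma fold_symmDiff_add' {β γ : Type*} [DecidableEq β] [DecidableEq γ]
    (g : γ → Finset β) (A C : Finset γ) :
    (A ∆ C).fold (fun a b : Finset β => a ∆ b) ∅ g
      = A.fold (fun a b : Finset β => a ∆ b) ∅ g ∆ C.fold (fun a b : Finset β => a ∆ b) ∅ g := by
  ext x
  rw [Finset.mem_symmDiff, mem_fold_symmDiff', mem_fold_symmDiff', mem_fold_symmDiff']
  have hf : (A ∆ C).filter (fun i => x ∈ g i)
      = A.filter (fun i => x ∈ g i) ∆ C.filter (fun i => x ∈ g i) := by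
    ext y; simp [Finset.mem_symmDiff, Finset.mem_filter]; tauto
  rw [hf, odd_card_symmDiff', Nat.odd_iff, Nat.odd_iff, Nat.odd_iff]
  omega

lemma par_singleton_iff {n : ℕ} {i : Fin n} {A B : Finset (Option (Fin n))}
    (h : par {i} A = par {i} B) : (some i ∈ A ↔ some i ∈ B) := by
  unfold par at h
  rw [Finset.filter_singleton, Finset.filter_singleton] at h
  by_cases hA : some i ∈ A <;> by_cases hB : some i ∈ B <;>
    simp [hA, hB] at h ⊢ <;> exact absurd h (by decide)

lemma some_not_mem_gIS {n : ℕ} (Sij : Fin 3 → Finset (Option (Fin n))) (i : Fin n) :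
    some i ∉ gIS Sij {i} := by
  have key : ∀ (S1 S2 : Finset (Option (Fin n))), (some i ∈ S1 ↔ some i ∈ S2) →
      some i ∉ ({none} : Finset (Option (Fin n))) ∆ S1 ∆ S2 := by
    intro S1 S2 h hc
    simp [Finset.mem_symmDiff] at hc
    tauto
  unfold gIS
  split_ifs with h1 h2 h3
  · simp
  · exact key _ _ (par_singleton_iff h2)
  · exact key _ _ (par_singleton_iff h3)
  · have h4 : par {i} (Sij 0) = par {i} (Sij 1) := by
      have : ∀ a b c : ZMod 2, ¬ b = c → ¬ a = c → a = b := by decide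
      exact this _ _ _ h2 h3
    exact key _ _ (par_singleton_iff h4)

lemma some_not_mem_of_mem_VS {n m : ℕ} (Smat : Fin m → Fin 3 → Finset (Option (Fin n)))
    (i : Fin n) {T : Finset (Option (Fin n))} (hT : T ∈ VS Smat {i}) : some i ∉ T := by
  rw [VS, Finset.mem_image] at hT
  obtain ⟨s, -, rfl⟩ := hT
  rw [mem_fold_symmDiff']
  have h : (s.filter fun i' => some i ∈ gIS (Smat i') {i}) = ∅ :=
    Finset.filter_false_of_mem (fun j _ => some_not_mem_gIS _ _)
  simp [h]

lemma mem_VS_of_mem_WS {n m : ℕ} (Smat : Fin m → Fin 3 → Finset (Option (Fin n)))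
    (S : Finset (Fin n)) {T : Finset (Option (Fin n))} (hT : T ∈ WS Smat S) :
    T ∈ VS Smat S := by
  unfold WS at hT
  split_ifs at hT with h
  · exact (Finset.mem_filter.mp hT).1
  · exact hT

/-- for every blocking set `𝔅` there exists `f ∈ OBM_Sub` such that
`({k}, f({k})) ∈ 𝔅` for every `k` and `π(f(S)) = π(T)` for every `(S,T) ∈ 𝔅`. -/
theorem stmt_12 (n m : ℕ) (hn : 2 ≤ n) (hm : 1 ≤ m)
    (Smat : Fin m → Fin 3 → Finset (Option (Fin n)))
    (B : Set (Finset (Fin n) × Finset (Option (Fin n))))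
    (hB : IsBlocking Smat B) :
    ∃ f : Finset (Fin n) → Finset (Option (Fin n)),
      (∀ i : Fin n, f {i} ∈ VS Smat {i}) ∧
      f ∅ = ∅ ∧
      (∀ A C : Finset (Fin n), proj (f (A ∆ C)) = proj (f A) ∆ proj (f C)) ∧
      (∀ i j : Fin n, (some i ∈ f {j} ↔ some j ∈ f {i})) ∧
      (∀ i : Fin n, some i ∉ f {i}) ∧
      (∀ k : Fin n, (({k} : Finset (Fin n)), f {k}) ∈ B) ∧
      (∀ x ∈ B, proj (f x.1) = proj x.2) := by
  classical
  obtain ⟨hBsub, hBex, hBun⟩ := hB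
  choose T hT1 hT2 using hBex
  set f : Finset (Fin n) → Finset (Option (Fin n)) :=
    fun S => if h : ∃ k, S = {k} then T h.choose
      else Finset.map ⟨some, Option.some_injective _⟩
        (S.fold (fun a b : Finset (Fin n) => a ∆ b) ∅ (fun k => proj (T k))) with hf
  have hfs : ∀ k : Fin n, f {k} = T k := by
    intro k
    have h : ∃ k', ({k} : Finset (Fin n)) = {k'} := ⟨k, rfl⟩
    have hk : h.choose = k := (Finset.singleton_injective h.choose_spec.symm)
    simp only [hf]
    rw [dif_pos h, hk]
  have key : ∀ S : Finset (Fin n),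
      proj (f S) = S.fold (fun a b : Finset (Fin n) => a ∆ b) ∅ (fun k => proj (T k)) := by
    intro S
    by_cases h : ∃ k, S = {k}
    · obtain ⟨k, rfl⟩ := h
      rw [hfs k, Finset.fold_singleton]
      ext j
      simp [Finset.mem_symmDiff]
    · simp only [hf]
      rw [dif_neg h]
      ext j
      rw [mem_proj', Finset.mem_map]
      simp
  have hsymm : ∀ i j : Fin n, some i ∈ T j ↔ some j ∈ T i := by
    intro i j
    have hun := hBun i (T i) (hT2 i) ({j}, T j) (hT2 j)
    have hP : ¬ Odd ((({j} : Finset (Fin n)).filter fun t => some t ∈ T i).card +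
        (({i} : Finset (Fin n)).filter fun t => some t ∈ T j).card) :=
      fun hO => hun ⟨hO, Or.inl (Finset.card_singleton i)⟩
    rw [Finset.filter_singleton, Finset.filter_singleton] at hP
    by_cases h1 : some j ∈ T i <;> by_cases h2 : some i ∈ T j <;>
      simp [h1, h2, Nat.odd_iff] at hP ⊢
  refine ⟨f, ?_, ?_, ?_, ?_, ?_, ?_, ?_⟩
  · intro i
    rw [hfs i]
    exact mem_VS_of_mem_WS _ _ (hT1 i)
  · have h : ¬ ∃ k, (∅ : Finset (Fin n)) = {k} := by
      rintro ⟨k, hk⟩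
      exact (Finset.singleton_ne_empty k) hk.symm
    simp only [hf]
    rw [dif_neg h]
    simp
  · intro A C
    rw [key, key, key, fold_symmDiff_add']
  · intro i j
    rw [hfs i, hfs j]
    exact hsymm i j
  · intro i
    rw [hfs i]
    exact some_not_mem_of_mem_VS Smat i (mem_VS_of_mem_WS _ _ (hT1 i))
  · intro k
    rw [hfs k]
    exact hT2 k
  · rintro ⟨S, T'⟩ hx
    rw [key]
    ext k
    rw [mem_fold_symmDiff', mem_proj']
    have hun := hBun k (T k) (hT2 k) (S, T') hx
    have hP : ¬ Odd ((S.filter fun t => some t ∈ T k).card +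
        (({k} : Finset (Fin n)).filter fun t => some t ∈ T').card) :=
      fun hO => hun ⟨hO, Or.inl (Finset.card_singleton k)⟩
    have hfe : S.filter (fun j => k ∈ proj (T j)) = S.filter (fun t => some t ∈ T k) := by
      ext j
      simp only [Finset.mem_filter, mem_proj']
      rw [hsymm]
    rw [hfe]
    rw [Finset.filter_singleton] at hP
    by_cases hk : some k ∈ T' <;> simp [hk, Nat.odd_iff] at hP ⊢ <;> omega
end
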